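/- arXiv:1812.10589 — 2 statements merged into one kernel-verified Lean document; each statement's English description precedes it below -/
import Mathlib

section
/- Let t be a real number with 1/2 < t < 1. If the function f belongs to the class Σ'(t), then the second Taylor–Maclaurin coefficient of f satisfies |a₂| ≤ t√(2t) / √(1 − t²). -/
/-!
Write `U t w = 1 / (1 - 2 t w + w²) = 1 + 2t w + (4t² - 1) w² + ⋯`, so that `f' = U t ∘ Φ` and
`g' = U t ∘ Ψ`. Faà di Bruno's formula expresses `f''(0)` and `f'''(0)` through `Φ'(0)` and
`Φ''(0)` (likewise for `g`), while differentiating `g ∘ f = id` three times gives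
`g''(0) = -f''(0)` and `g'''(0) = 3 f''(0)² - f'''(0)`. Eliminating `Φ'(0)` and `Ψ'(0)` leaves
`f''(0)² (1 - t²) = 2 t³ (Φ''(0) + Ψ''(0))`, and Cauchy's estimate `‖Φ''(0)‖, ‖Ψ''(0)‖ ≤ 2`
yields `|a₂|² = ‖f''(0)‖² / 4 ≤ 2 t³ / (1 - t²)`.
-/

open Metric Filter Topology

theorem Complex.norm_iteratedDeriv_le_of_forall_mem_ball_norm_le {F : Type*}
    [NormedAddCommGroup F] [NormedSpace ℂ F] [CompleteSpace F] {c : ℂ} {R C : ℝ} {f : ℂ → F}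
    (n : ℕ) (hR : 0 < R) (hf : DifferentiableOn ℂ f (ball c R))
    (hC : ∀ z ∈ ball c R, ‖f z‖ ≤ C) :
    ‖iteratedDeriv n f c‖ ≤ n.factorial * C / R ^ n := by
  have hlim : Tendsto (fun r : ℝ => n.factorial * C / r ^ n) (𝓝[<] R)
      (𝓝 (n.factorial * C / R ^ n)) :=
    ((continuousAt_const.div (continuousAt_pow R n) (pow_ne_zero n hR.ne')).tendsto).mono_left
      nhdsWithin_le_nhds
  refine ge_of_tendsto hlim ?_
  filter_upwards [Ioo_mem_nhdsLT hR] with r hr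
  exact norm_iteratedDeriv_le_of_forall_mem_sphere_norm_le n hr.1
    (hf.diffContOnCl_ball (closedBall_subset_ball hr.2))
    fun z hz => hC z (sphere_subset_closedBall.trans (closedBall_subset_ball hr.2) hz)

section

variable {𝕜 : Type*} [NontriviallyNormedField 𝕜]

def chebyshevUGenFun (t w : 𝕜) : 𝕜 := 1 / (1 - 2 * t * w + w ^ 2)

@[simp]
lemma chebyshevUGenFun_zero (t : 𝕜) : chebyshevUGenFun t 0 = 1 := by
  simp [chebyshevUGenFun]

lemma contDiffAt_chebyshevUGenFun_zero (t : 𝕜) {n : WithTop ℕ∞} :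
    ContDiffAt 𝕜 n (chebyshevUGenFun t) 0 :=
  contDiffAt_const.div (by fun_prop) (by simp)

lemma hasDerivAt_chebyshevUGenFun (t : 𝕜) {w : 𝕜} (hw : 1 - 2 * t * w + w ^ 2 ≠ 0) :
    HasDerivAt (chebyshevUGenFun t) ((2 * t - 2 * w) * chebyshevUGenFun t w ^ 2) w := by
  have hD : HasDerivAt (fun w : 𝕜 => 1 - 2 * t * w + w ^ 2) (-(2 * t) + 2 * w) w := by
    simpa using (((hasDerivAt_id w).const_mul (2 * t)).const_sub 1).fun_add (hasDerivAt_pow 2 w)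
  have hR : chebyshevUGenFun t = fun w => (1 - 2 * t * w + w ^ 2)⁻¹ := by
    ext w
    exact one_div _
  rw [hR]
  refine (hD.fun_inv hw).congr_deriv ?_
  field_simp
  ring

lemma deriv_chebyshevUGenFun_eventuallyEq (t : 𝕜) :
    deriv (chebyshevUGenFun t) =ᶠ[𝓝 0] fun w => (2 * t - 2 * w) * chebyshevUGenFun t w ^ 2 := by
  have hD : ContinuousAt (fun w : 𝕜 => 1 - 2 * t * w + w ^ 2) 0 := by fun_prop
  filter_upwards [hD.eventually_ne (by simp : (1 : 𝕜) - 2 * t * 0 + 0 ^ 2 ≠ 0)] with w hw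
  exact (hasDerivAt_chebyshevUGenFun t hw).deriv

lemma deriv_chebyshevUGenFun_zero (t : 𝕜) : deriv (chebyshevUGenFun t) 0 = 2 * t := by
  simp [(deriv_chebyshevUGenFun_eventuallyEq t).eq_of_nhds]

lemma iteratedDeriv_two_chebyshevUGenFun_zero (t : 𝕜) :
    iteratedDeriv 2 (chebyshevUGenFun t) 0 = 8 * t ^ 2 - 2 := by
  rw [iteratedDeriv_succ, iteratedDeriv_one, (deriv_chebyshevUGenFun_eventuallyEq t).deriv_eq]
  have h := (((hasDerivAt_id (0 : 𝕜)).const_mul 2).const_sub (2 * t)).fun_mul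
    ((hasDerivAt_chebyshevUGenFun t (by simp)).fun_pow 2)
  simp only [id] at h
  rw [h.deriv]
  simp only [mul_one, chebyshevUGenFun_zero, one_pow, mul_zero, sub_zero, Nat.cast_ofNat,
    Nat.add_one_sub_one]
  ring

variable {f g Φ Ψ : 𝕜 → 𝕜} {t x : 𝕜}

lemma deriv_eq_one_of_comp_eventuallyEq_id (hf : DifferentiableAt 𝕜 f x)
    (hg : DifferentiableAt 𝕜 g (f x)) (hf1 : deriv f x = 1) (hgf : g ∘ f =ᶠ[𝓝 x] id) :
    deriv g (f x) = 1 := by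
  simpa [deriv_comp x hg hf, hf1] using hgf.deriv_eq

lemma iteratedDeriv_two_eq_neg_of_comp_eventuallyEq_id (hf : ContDiffAt 𝕜 2 f x)
    (hg : ContDiffAt 𝕜 2 g (f x)) (hf1 : deriv f x = 1) (hgf : g ∘ f =ᶠ[𝓝 x] id) :
    iteratedDeriv 2 g (f x) = -iteratedDeriv 2 f x := by
  have hg1 := deriv_eq_one_of_comp_eventuallyEq_id (hf.differentiableAt two_ne_zero)
    (hg.differentiableAt two_ne_zero) hf1 hgf
  have h := hgf.iteratedDeriv_eq 2
  rw [iteratedDeriv_comp_two hg hf, iteratedDeriv_id, hf1, hg1] at h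
  simp only [one_pow, mul_one, one_mul, OfNat.ofNat_ne_zero, OfNat.ofNat_ne_one, if_false] at h
  linear_combination h

lemma iteratedDeriv_three_of_comp_eventuallyEq_id (hf : ContDiffAt 𝕜 3 f x)
    (hg : ContDiffAt 𝕜 3 g (f x)) (hf1 : deriv f x = 1) (hgf : g ∘ f =ᶠ[𝓝 x] id) :
    iteratedDeriv 3 g (f x) = 3 * iteratedDeriv 2 f x ^ 2 - iteratedDeriv 3 f x := by
  have hg1 := deriv_eq_one_of_comp_eventuallyEq_id (hf.differentiableAt three_ne_zero)
    (hg.differentiableAt three_ne_zero) hf1 hgf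
  have hg2 := iteratedDeriv_two_eq_neg_of_comp_eventuallyEq_id (hf.of_le (by norm_num))
    (hg.of_le (by norm_num)) hf1 hgf
  have h := hgf.iteratedDeriv_eq 3
  rw [iteratedDeriv_comp_three hg hf, iteratedDeriv_id, hf1, hg1, hg2] at h
  simp only [one_pow, mul_one, one_mul, OfNat.ofNat_ne_zero, OfNat.ofNat_ne_one, if_false] at h
  linear_combination h

lemma deriv_eq_one_of_deriv_eventuallyEq_chebyshevUGenFun (hΦ0 : Φ x = 0)
    (hf : deriv f =ᶠ[𝓝 x] chebyshevUGenFun t ∘ Φ) : deriv f x = 1 := by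
  simp [hf.eq_of_nhds, hΦ0]

lemma iteratedDeriv_two_of_deriv_eventuallyEq_chebyshevUGenFun (hΦ : DifferentiableAt 𝕜 Φ x)
    (hΦ0 : Φ x = 0) (hf : deriv f =ᶠ[𝓝 x] chebyshevUGenFun t ∘ Φ) :
    iteratedDeriv 2 f x = 2 * t * deriv Φ x := by
  have hR : DifferentiableAt 𝕜 (chebyshevUGenFun t) (Φ x) :=
    hΦ0 ▸ (contDiffAt_chebyshevUGenFun_zero t (n := 1)).differentiableAt one_ne_zero
  rw [iteratedDeriv_succ', iteratedDeriv_one, hf.deriv_eq, deriv_comp x hR hΦ, hΦ0,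
    deriv_chebyshevUGenFun_zero]

lemma iteratedDeriv_three_of_deriv_eventuallyEq_chebyshevUGenFun (hΦ : ContDiffAt 𝕜 2 Φ x)
    (hΦ0 : Φ x = 0) (hf : deriv f =ᶠ[𝓝 x] chebyshevUGenFun t ∘ Φ) :
    iteratedDeriv 3 f x = (8 * t ^ 2 - 2) * deriv Φ x ^ 2 + 2 * t * iteratedDeriv 2 Φ x := by
  rw [iteratedDeriv_succ', hf.iteratedDeriv_eq,
    iteratedDeriv_comp_two (hΦ0 ▸ contDiffAt_chebyshevUGenFun_zero t) hΦ, hΦ0,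
    iteratedDeriv_two_chebyshevUGenFun_zero, deriv_chebyshevUGenFun_zero]

lemma sq_iteratedDeriv_two_mul_one_sub_sq (hf : ContDiffAt 𝕜 3 f 0) (hg : ContDiffAt 𝕜 3 g 0)
    (hf0 : f 0 = 0) (hgf : g ∘ f =ᶠ[𝓝 0] id)
    (hΦ : ContDiffAt 𝕜 2 Φ 0) (hΦ0 : Φ 0 = 0) (hΨ : ContDiffAt 𝕜 2 Ψ 0) (hΨ0 : Ψ 0 = 0)
    (hfΦ : deriv f =ᶠ[𝓝 0] chebyshevUGenFun t ∘ Φ)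
    (hgΨ : deriv g =ᶠ[𝓝 0] chebyshevUGenFun t ∘ Ψ) :
    iteratedDeriv 2 f 0 ^ 2 * (1 - t ^ 2) =
      2 * t ^ 3 * (iteratedDeriv 2 Φ 0 + iteratedDeriv 2 Ψ 0) := by
  have hf1 := deriv_eq_one_of_deriv_eventuallyEq_chebyshevUGenFun hΦ0 hfΦ
  have hg' : ContDiffAt 𝕜 3 g (f 0) := by rwa [hf0]
  have hg2 := iteratedDeriv_two_eq_neg_of_comp_eventuallyEq_id (hf.of_le (by norm_num))
    (hg'.of_le (by norm_num)) hf1 hgf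
  have hg3 := iteratedDeriv_three_of_comp_eventuallyEq_id hf hg' hf1 hgf
  rw [hf0] at hg2 hg3
  have hf2Φ := iteratedDeriv_two_of_deriv_eventuallyEq_chebyshevUGenFun
    (hΦ.differentiableAt two_ne_zero) hΦ0 hfΦ
  have hg2Ψ := iteratedDeriv_two_of_deriv_eventuallyEq_chebyshevUGenFun
    (hΨ.differentiableAt two_ne_zero) hΨ0 hgΨ
  have hf3Φ := iteratedDeriv_three_of_deriv_eventuallyEq_chebyshevUGenFun hΦ hΦ0 hfΦ
  have hg3Ψ := iteratedDeriv_three_of_deriv_eventuallyEq_chebyshevUGenFun hΨ hΨ0 hgΨ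
  set A := iteratedDeriv 2 f 0
  set c := t * (deriv Φ 0 - deriv Ψ 0)
  -- `Φ'(0)² - Ψ'(0)²` is eliminated through `2 t (Φ'(0) + Ψ'(0)) = f''(0) + g''(0) = 0`,
  -- so that no division by 2 is needed.
  linear_combination t ^ 2 * hf3Φ + t ^ 2 * hg3Ψ - t ^ 2 * hg3
    + (1 - 4 * t ^ 2) * ((A + 2 * t * deriv Φ 0 - c) * hf2Φ - c * hg2Ψ + c * hg2)

end

lemma norm_div_two_le_of_sq_mul_one_sub_sq_eq {A c d : ℂ} {t : ℝ} (ht0 : 0 < t) (ht1 : t < 1)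
    (hc : ‖c‖ ≤ 2) (hd : ‖d‖ ≤ 2) (h : A ^ 2 * (1 - t ^ 2) = 2 * t ^ 3 * (c + d)) :
    ‖A / 2‖ ≤ t * Real.sqrt (2 * t) / Real.sqrt (1 - t ^ 2) := by
  have ht2 : 0 < 1 - t ^ 2 := by nlinarith
  have hA : ‖A‖ ^ 2 * (1 - t ^ 2) ≤ 8 * t ^ 3 :=
    calc ‖A‖ ^ 2 * (1 - t ^ 2) = ‖A ^ 2 * (1 - (t : ℂ) ^ 2)‖ := by
          rw [norm_mul, norm_pow, ← Complex.ofReal_pow, ← Complex.ofReal_one,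
            ← Complex.ofReal_sub, Complex.norm_of_nonneg ht2.le]
      _ = 2 * t ^ 3 * ‖c + d‖ := by
          rw [h, norm_mul, norm_mul, norm_pow, Complex.norm_real, Real.norm_of_nonneg ht0.le,
            Complex.norm_two]
      _ ≤ 2 * t ^ 3 * (2 + 2) := by gcongr; exact (norm_add_le c d).trans (add_le_add hc hd)
      _ = 8 * t ^ 3 := by ring
  rw [norm_div, Complex.norm_two, le_div_iff₀ (Real.sqrt_pos.2 ht2),
    ← pow_le_pow_iff_left₀ (by positivity) (by positivity) two_ne_zero, mul_pow, mul_pow,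
    Real.sq_sqrt ht2.le, Real.sq_sqrt (by positivity)]
  nlinarith

theorem chebyshev_abs_a2_le_general
    (t : ℝ) (f g Φ Ψ : ℂ → ℂ)
    (ht : 1 / 2 < t) (ht1 : t < 1)
    (hf : AnalyticOnNhd ℂ f (ball 0 1))
    (hf0 : f 0 = 0)
    (hg : AnalyticOnNhd ℂ g (ball 0 1))
    (hgf : ∀ᶠ z in nhds (0 : ℂ), g (f z) = z)
    (hΦ : AnalyticOnNhd ℂ Φ (ball 0 1)) (hΦ0 : Φ 0 = 0)
    (hΦlt : ∀ z ∈ ball (0 : ℂ) 1, ‖Φ z‖ < 1)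
    (hΨ : AnalyticOnNhd ℂ Ψ (ball 0 1)) (hΨ0 : Ψ 0 = 0)
    (hΨlt : ∀ w ∈ ball (0 : ℂ) 1, ‖Ψ w‖ < 1)
    (hfeq : ∀ z ∈ ball (0 : ℂ) 1,
      deriv f z = 1 / ((1 : ℂ) - 2 * (t : ℂ) * Φ z + (Φ z) ^ 2))
    (hgeq : ∀ w ∈ ball (0 : ℂ) 1,
      deriv g w = 1 / ((1 : ℂ) - 2 * (t : ℂ) * Ψ w + (Ψ w) ^ 2)) :
    ‖iteratedDeriv 2 f 0 / 2‖ ≤ t * Real.sqrt (2 * t) / Real.sqrt (1 - t ^ 2) := by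
  have h0 : (0 : ℂ) ∈ ball 0 1 := mem_ball_self one_pos
  have hΦ2 : ‖iteratedDeriv 2 Φ 0‖ ≤ 2 := by
    simpa using Complex.norm_iteratedDeriv_le_of_forall_mem_ball_norm_le 2 one_pos
      hΦ.differentiableOn fun z hz => (hΦlt z hz).le
  have hΨ2 : ‖iteratedDeriv 2 Ψ 0‖ ≤ 2 := by
    simpa using Complex.norm_iteratedDeriv_le_of_forall_mem_ball_norm_le 2 one_pos
      hΨ.differentiableOn fun z hz => (hΨlt z hz).le
  refine norm_div_two_le_of_sq_mul_one_sub_sq_eq (by linarith) ht1 hΦ2 hΨ2 ?_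
  exact_mod_cast sq_iteratedDeriv_two_mul_one_sub_sq (hf 0 h0).contDiffAt (hg 0 h0).contDiffAt
    hf0 hgf (hΦ 0 h0).contDiffAt hΦ0 (hΨ 0 h0).contDiffAt hΨ0
    (eventually_of_mem (ball_mem_nhds 0 one_pos) hfeq)
    (eventually_of_mem (ball_mem_nhds 0 one_pos) hgeq)

/-- **Corollary 2.3, bound (25).** For `1/2 < t < 1`, if `f` belongs to the Chebyshev class `Sigma'(t)`, then `|a₂| ≤ t √(2t) / √(1 - t²)`. -/
theorem chebyshev_abs_a2_le
    (t : ℝ) (f g Φ Ψ : ℂ → ℂ)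
    (ht : 1 / 2 < t) (ht1 : t < 1)
    (hf : AnalyticOnNhd ℂ f (ball 0 1)) (hfinj : Set.InjOn f (ball 0 1))
    (hf0 : f 0 = 0) (hf1 : deriv f 0 = 1)
    (hg : AnalyticOnNhd ℂ g (ball 0 1)) (hginj : Set.InjOn g (ball 0 1))
    (hg0 : g 0 = 0)
    (hgf : ∀ᶠ z in nhds (0 : ℂ), g (f z) = z)
    (hfg : ∀ᶠ w in nhds (0 : ℂ), f (g w) = w)
    (hΦ : AnalyticOnNhd ℂ Φ (ball 0 1)) (hΦ0 : Φ 0 = 0)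
    (hΦlt : ∀ z ∈ ball (0 : ℂ) 1, ‖Φ z‖ < 1)
    (hΨ : AnalyticOnNhd ℂ Ψ (ball 0 1)) (hΨ0 : Ψ 0 = 0)
    (hΨlt : ∀ w ∈ ball (0 : ℂ) 1, ‖Ψ w‖ < 1)
    (hΦden : ∀ z ∈ ball (0 : ℂ) 1, (1 : ℂ) - 2 * (t : ℂ) * Φ z + (Φ z) ^ 2 ≠ 0)
    (hΨden : ∀ w ∈ ball (0 : ℂ) 1, (1 : ℂ) - 2 * (t : ℂ) * Ψ w + (Ψ w) ^ 2 ≠ 0)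
    (hfeq : ∀ z ∈ ball (0 : ℂ) 1,
      deriv f z = 1 / ((1 : ℂ) - 2 * (t : ℂ) * Φ z + (Φ z) ^ 2))
    (hgeq : ∀ w ∈ ball (0 : ℂ) 1,
      deriv g w = 1 / ((1 : ℂ) - 2 * (t : ℂ) * Ψ w + (Ψ w) ^ 2)) :
    ‖iteratedDeriv 2 f 0 / 2‖ ≤ t * Real.sqrt (2 * t) / Real.sqrt (1 - t ^ 2) :=
  chebyshev_abs_a2_le_general t f g Φ Ψ ht ht1 hf hf0 hg hgf hΦ hΦ0 hΦlt hΨ hΨ0 hΨlt hfeq hgeq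
end

section
/- Let t be a real number with 1/2 < t < 1. If the function f belongs to the class Σ'(t), then for every real number η: |a₃ − η a₂²| ≤ 4t/3 whenever |η − 1| ≤ (1 − t²)/(3t²), and |a₃ − η a₂²| ≤ 2|η − 1|/(1 − t²) whenever |η − 1| ≥ (1 − t²)/(3t²). -/
/-!
Write `c₁, c₂` and `d₁, d₂` for the first Taylor coefficients of `Φ` and `Ψ`. Expanding
`f' = Ω(t, Φ)` with `Ω(t, w) = 1 / (1 - 2tw + w²) = 1 + 2tw + (4t² - 1)w² + ⋯` gives
`a₂ = t c₁` and `3 a₃ = 2t c₂ + (4t² - 1) c₁²`, and likewise for `g` with `d₁, d₂`. Since `g`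
inverts `f`, its coefficients are `-a₂` and `2a₂² - a₃`; hence `d₁ = -c₁` and
`a₃ - η a₂² = t (c₂ - d₂) / 3 + (1 - η) t² c₁²`. Cauchy's estimate on the unit disc gives
`|c₁|, |c₂|, |d₂| ≤ 1`, so `|a₃ - η a₂²| ≤ 2t/3 + |η - 1| t²`, and both bounds reduce to
elementary inequalities in `t`.
-/

open Metric Filter Topology

namespace Complex

theorem norm_iteratedDeriv_le_of_forall_mem_ball_norm_le_s5 {E : Type*} [NormedAddCommGroup E]
    [NormedSpace ℂ E] [CompleteSpace E] {f : ℂ → E} {c : ℂ} {R C : ℝ} (n : ℕ) (hR : 0 < R)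
    (hf : DifferentiableOn ℂ f (ball c R)) (hC : ∀ z ∈ ball c R, ‖f z‖ ≤ C) :
    ‖iteratedDeriv n f c‖ ≤ n.factorial * C / R ^ n := by
  have hcont : ContinuousAt (fun r : ℝ => n.factorial * C / r ^ n) R :=
    continuousAt_const.div (continuousAt_id.pow n) (pow_ne_zero n hR.ne')
  refine ge_of_tendsto (hcont.tendsto.mono_left (nhdsWithin_le_nhds (s := Set.Iio R))) ?_
  filter_upwards [Ioo_mem_nhdsLT hR] with r ⟨hr0, hrR⟩
  have hsub : closedBall c r ⊆ ball c R := closedBall_subset_ball hrR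
  exact norm_iteratedDeriv_le_of_forall_mem_sphere_norm_le n hr0
    ((hf.mono hsub).diffContOnCl_ball subset_rfl)
    fun z hz => hC z (hsub (sphere_subset_closedBall hz))

end Complex

noncomputable def chebyshevGeneratingFunction (t w : ℂ) : ℂ := (1 - 2 * t * w + w ^ 2)⁻¹

namespace chebyshevGeneratingFunction

variable (t : ℂ)

theorem analyticAt_zero : AnalyticAt ℂ (chebyshevGeneratingFunction t) 0 := by
  unfold chebyshevGeneratingFunction
  fun_prop (disch := norm_num)

theorem hasDerivAt_denominator (w : ℂ) :
    HasDerivAt (fun w : ℂ => 1 - 2 * t * w + w ^ 2) (2 * w - 2 * t) w := by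
  refine ((((hasDerivAt_id' w).const_mul (2 * t)).const_sub 1).fun_add
    (hasDerivAt_pow 2 w)).congr_deriv ?_
  simp only [mul_one, Nat.cast_ofNat, Nat.add_one_sub_one, pow_one]
  ring

theorem deriv_zero : deriv (chebyshevGeneratingFunction t) 0 = 2 * t := by
  unfold chebyshevGeneratingFunction
  simpa using ((hasDerivAt_denominator t 0).fun_inv (by norm_num)).deriv

theorem iteratedDeriv_two_zero :
    iteratedDeriv 2 (chebyshevGeneratingFunction t) 0 = 8 * t ^ 2 - 2 := by
  set p : ℂ → ℂ := fun w => 1 - 2 * t * w + w ^ 2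
  have hp₀ : p 0 = 1 := by simp [p]
  have hp₁ : deriv p = fun w => 2 * w - 2 * t := funext fun w => (hasDerivAt_denominator t w).deriv
  have hp₂ : iteratedDeriv 2 p 0 = 2 := by simp [iteratedDeriv_succ, hp₁]
  have hinv : ContDiffAt ℂ 2 (·⁻¹ : ℂ → ℂ) (p 0) := hp₀ ▸ contDiffAt_inv ℂ one_ne_zero
  have hinv₁ : deriv (·⁻¹ : ℂ → ℂ) 1 = -1 := by simp
  have hinv₂ : iteratedDeriv 2 (·⁻¹ : ℂ → ℂ) 1 = 2 := by simp [iteratedDeriv_succ]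
  rw [show chebyshevGeneratingFunction t = (·⁻¹) ∘ p from rfl,
    iteratedDeriv_comp_two hinv (by fun_prop : ContDiff ℂ 2 p).contDiffAt, hp₀, hinv₁, hinv₂, hp₁,
    hp₂]
  ring

end chebyshevGeneratingFunction

theorem iteratedDeriv_eq_of_comp_eventuallyEq_id {𝕜 : Type*} [NontriviallyNormedField 𝕜]
    {f g : 𝕜 → 𝕜} {x : 𝕜} (hg : ContDiffAt 𝕜 3 g (f x)) (hf : ContDiffAt 𝕜 3 f x)
    (hgf : g ∘ f =ᶠ[𝓝 x] id) (hf1 : deriv f x = 1) :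
    deriv g (f x) = 1 ∧ iteratedDeriv 2 g (f x) = -iteratedDeriv 2 f x ∧
      iteratedDeriv 3 g (f x) = 3 * iteratedDeriv 2 f x ^ 2 - iteratedDeriv 3 f x := by
  have h1 : deriv g (f x) = 1 := by
    simpa [deriv_comp x (hg.differentiableAt (by norm_num)) (hf.differentiableAt (by norm_num)),
      hf1] using hgf.deriv_eq
  have h2 := hgf.iteratedDeriv_eq 2
  have h3 := hgf.iteratedDeriv_eq 3
  rw [iteratedDeriv_comp_two (hg.of_le (by norm_num)) (hf.of_le (by norm_num)), h1, hf1] at h2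
  rw [iteratedDeriv_comp_three hg hf, h1, hf1] at h3
  simp only [one_pow, mul_one, one_mul, iteratedDeriv_id, OfNat.ofNat_ne_zero, ↓reduceIte,
    OfNat.ofNat_ne_one] at h2 h3
  refine ⟨h1, by linear_combination h2, by linear_combination h3 - 3 * iteratedDeriv 2 f x * h2⟩

theorem iteratedDeriv_of_deriv_eq_chebyshevGeneratingFunction_comp {t : ℂ} {f Φ : ℂ → ℂ}
    (hΦ : AnalyticAt ℂ Φ 0) (hΦ0 : Φ 0 = 0)
    (hf : deriv f =ᶠ[𝓝 0] chebyshevGeneratingFunction t ∘ Φ) :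
    iteratedDeriv 2 f 0 = 2 * t * deriv Φ 0 ∧
      iteratedDeriv 3 f 0 = 2 * t * iteratedDeriv 2 Φ 0 + (8 * t ^ 2 - 2) * deriv Φ 0 ^ 2 := by
  have hF : AnalyticAt ℂ (chebyshevGeneratingFunction t) (Φ 0) := by
    rw [hΦ0]; exact chebyshevGeneratingFunction.analyticAt_zero t
  rw [iteratedDeriv_succ' (n := 1), iteratedDeriv_succ' (n := 2), hf.iteratedDeriv_eq,
    hf.iteratedDeriv_eq, iteratedDeriv_one, deriv_comp 0 hF.differentiableAt hΦ.differentiableAt,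
    iteratedDeriv_comp_two hF.contDiffAt hΦ.contDiffAt, hΦ0,
    chebyshevGeneratingFunction.deriv_zero, chebyshevGeneratingFunction.iteratedDeriv_two_zero]
  constructor <;> ring

theorem fekete_szego_functional_eq {t η c₁ d₁ p q A₂ A₃ : ℂ} (ht : t ≠ 0)
    (hA₂ : A₂ = 2 * t * c₁) (hA₃ : A₃ = 2 * t * p + (8 * t ^ 2 - 2) * c₁ ^ 2)
    (hB₂ : 2 * t * d₁ = -A₂) (hB₃ : 2 * t * q + (8 * t ^ 2 - 2) * d₁ ^ 2 = 3 * A₂ ^ 2 - A₃) :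
    A₃ / 6 - η * (A₂ / 2) ^ 2 = t * (p - q) / 6 + (1 - η) * t ^ 2 * c₁ ^ 2 := by
  have hd₁ : d₁ = -c₁ :=
    mul_left_cancel₀ (mul_ne_zero two_ne_zero ht) (by linear_combination hB₂ - hA₂)
  subst hd₁ hA₂ hA₃
  linear_combination (1 / 12 : ℂ) * hB₃

theorem norm_fekete_szego_functional_le {t : ℝ} {η : ℝ} {c p q : ℂ} (ht : 0 ≤ t)
    (hc : ‖c‖ ≤ 1) (hp : ‖p‖ ≤ 2) (hq : ‖q‖ ≤ 2) :
    ‖(t : ℂ) * (p - q) / 6 + (1 - η) * t ^ 2 * c ^ 2‖ ≤ 2 * t / 3 + |η - 1| * t ^ 2 := by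
  have h₁ : ‖(t : ℂ) * (p - q) / 6‖ ≤ 2 * t / 3 := by
    have := norm_sub_le p q
    rw [norm_div, norm_mul, Complex.norm_real, Real.norm_of_nonneg ht, RCLike.norm_ofNat]
    nlinarith
  have h₂ : ‖(1 - (η : ℂ)) * t ^ 2 * c ^ 2‖ ≤ |η - 1| * t ^ 2 := by
    rw [← Complex.ofReal_one, ← Complex.ofReal_sub, norm_mul, norm_mul, norm_pow, norm_pow,
      Complex.norm_real, Complex.norm_real, Real.norm_eq_abs, Real.norm_eq_abs, abs_sub_comm,
      sq_abs]
    have hc₂ : ‖c‖ ^ 2 ≤ 1 := pow_le_one₀ (norm_nonneg c) hc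
    nlinarith [mul_nonneg (mul_nonneg (abs_nonneg (η - 1)) (sq_nonneg t)) (sub_nonneg.2 hc₂)]
  exact (norm_add_le _ _).trans (add_le_add h₁ h₂)

theorem add_mul_sq_le_four_mul_div_three {t s : ℝ} (ht : 1 / 2 < t)
    (hs : s ≤ (1 - t ^ 2) / (3 * t ^ 2)) :
    2 * t / 3 + s * t ^ 2 ≤ 4 * t / 3 := by
  have hs' : s * (3 * t ^ 2) ≤ 1 - t ^ 2 := (le_div_iff₀ (by positivity)).1 hs
  nlinarith

theorem add_mul_sq_le_two_mul_div_one_sub_sq {t s : ℝ} (ht : 0 < t) (ht1 : t < 1)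
    (hs : (1 - t ^ 2) / (3 * t ^ 2) ≤ s) :
    2 * t / 3 + s * t ^ 2 ≤ 2 * s / (1 - t ^ 2) := by
  have h1t : 0 < 1 - t ^ 2 := by nlinarith
  have hs' : 1 - t ^ 2 ≤ s * (3 * t ^ 2) := (div_le_iff₀ (by positivity)).1 hs
  -- `2 - t² + t⁴ - 2t³ = (1 - t)(2 + 2t + t² - t³)`
  have hquartic : 2 * t ^ 3 ≤ 2 - t ^ 2 + t ^ 4 := by nlinarith [mul_pos ht ht]
  have key : t ^ 2 * (2 * t * (1 - t ^ 2)) ≤ t ^ 2 * (3 * s * (2 - t ^ 2 + t ^ 4)) := by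
    nlinarith [mul_le_mul_of_nonneg_right hs' (by nlinarith : (0 : ℝ) ≤ 2 - t ^ 2 + t ^ 4),
      mul_le_mul_of_nonneg_right hquartic h1t.le]
  rw [le_div_iff₀ h1t]
  nlinarith [le_of_mul_le_mul_left key (by positivity)]

theorem chebyshev_fekete_szego_general
    (t : ℝ) (f g Φ Ψ : ℂ → ℂ)
    (ht : 1 / 2 < t) (ht1 : t < 1)
    (hf : AnalyticOnNhd ℂ f (ball 0 1))
    (hf0 : f 0 = 0) (hf1 : deriv f 0 = 1)
    (hg : AnalyticOnNhd ℂ g (ball 0 1))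
    (hgf : ∀ᶠ z in nhds (0 : ℂ), g (f z) = z)
    (hΦ : AnalyticOnNhd ℂ Φ (ball 0 1)) (hΦ0 : Φ 0 = 0)
    (hΦlt : ∀ z ∈ ball (0 : ℂ) 1, ‖Φ z‖ < 1)
    (hΨ : AnalyticOnNhd ℂ Ψ (ball 0 1)) (hΨ0 : Ψ 0 = 0)
    (hΨlt : ∀ w ∈ ball (0 : ℂ) 1, ‖Ψ w‖ < 1)
    (hfeq : ∀ z ∈ ball (0 : ℂ) 1,
      deriv f z = 1 / ((1 : ℂ) - 2 * (t : ℂ) * Φ z + (Φ z) ^ 2))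
    (hgeq : ∀ w ∈ ball (0 : ℂ) 1,
      deriv g w = 1 / ((1 : ℂ) - 2 * (t : ℂ) * Ψ w + (Ψ w) ^ 2)) :
    ∀ η : ℝ,
      (|η - 1| ≤ (1 - t ^ 2) / (3 * t ^ 2) →
        ‖iteratedDeriv 3 f 0 / 6 - (η : ℂ) * (iteratedDeriv 2 f 0 / 2) ^ 2‖ ≤ 4 * t / 3) ∧
      ((1 - t ^ 2) / (3 * t ^ 2) ≤ |η - 1| →
        ‖iteratedDeriv 3 f 0 / 6 - (η : ℂ) * (iteratedDeriv 2 f 0 / 2) ^ 2‖ ≤ 2 * |η - 1| / (1 - t ^ 2)) := by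
  intro η
  have ht0 : 0 < t := by linarith
  have h0 : (0 : ℂ) ∈ ball 0 1 := mem_ball_self one_pos
  have hcheb {h Θ : ℂ → ℂ}
      (heq : ∀ z ∈ ball (0 : ℂ) 1, deriv h z = 1 / (1 - 2 * (t : ℂ) * Θ z + Θ z ^ 2)) :
      deriv h =ᶠ[𝓝 0] chebyshevGeneratingFunction t ∘ Θ :=
    eventually_of_mem (ball_mem_nhds 0 one_pos) fun z hz => by
      rw [heq z hz, one_div]; rfl
  obtain ⟨hA₂, hA₃⟩ :=
    iteratedDeriv_of_deriv_eq_chebyshevGeneratingFunction_comp (hΦ 0 h0) hΦ0 (hcheb hfeq)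
  obtain ⟨hB₂, hB₃⟩ :=
    iteratedDeriv_of_deriv_eq_chebyshevGeneratingFunction_comp (hΨ 0 h0) hΨ0 (hcheb hgeq)
  obtain ⟨-, hinv₂, hinv₃⟩ := iteratedDeriv_eq_of_comp_eventuallyEq_id
    (by rw [hf0]; exact (hg 0 h0).contDiffAt) (hf 0 h0).contDiffAt hgf hf1
  rw [hf0, hB₂] at hinv₂
  rw [hf0, hB₃] at hinv₃
  have hcauchy {Θ : ℂ → ℂ} (hΘ : AnalyticOnNhd ℂ Θ (ball 0 1))
      (hΘlt : ∀ z ∈ ball (0 : ℂ) 1, ‖Θ z‖ < 1) (n : ℕ) :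
      ‖iteratedDeriv n Θ 0‖ ≤ n.factorial := by
    simpa using Complex.norm_iteratedDeriv_le_of_forall_mem_ball_norm_le_s5 n one_pos
      hΘ.differentiableOn fun z hz => (hΘlt z hz).le
  have hbound := norm_fekete_szego_functional_le (η := η) ht0.le
    (by simpa using hcauchy hΦ hΦlt 1) (by simpa using hcauchy hΦ hΦlt 2)
    (by simpa using hcauchy hΨ hΨlt 2)
  rw [← fekete_szego_functional_eq (Complex.ofReal_ne_zero.2 ht0.ne') hA₂ hA₃ hinv₂ hinv₃]
    at hbound
  exact ⟨fun hη => hbound.trans (add_mul_sq_le_four_mul_div_three ht hη),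
    fun hη => hbound.trans (add_mul_sq_le_two_mul_div_one_sub_sq ht0 ht1 hη)⟩

/-- **Corollary 2.3, bound (27).** For `1/2 < t < 1`, if `f` belongs to the Chebyshev class `Sigma'(t)`, then for every real `η` the Fekete-Szego functional satisfies the two stated bounds. -/
theorem chebyshev_fekete_szego
    (t : ℝ) (f g Φ Ψ : ℂ → ℂ)
    (ht : 1 / 2 < t) (ht1 : t < 1)
    (hf : AnalyticOnNhd ℂ f (ball 0 1)) (hfinj : Set.InjOn f (ball 0 1))
    (hf0 : f 0 = 0) (hf1 : deriv f 0 = 1)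
    (hg : AnalyticOnNhd ℂ g (ball 0 1)) (hginj : Set.InjOn g (ball 0 1))
    (hg0 : g 0 = 0)
    (hgf : ∀ᶠ z in nhds (0 : ℂ), g (f z) = z)
    (hfg : ∀ᶠ w in nhds (0 : ℂ), f (g w) = w)
    (hΦ : AnalyticOnNhd ℂ Φ (ball 0 1)) (hΦ0 : Φ 0 = 0)
    (hΦlt : ∀ z ∈ ball (0 : ℂ) 1, ‖Φ z‖ < 1)
    (hΨ : AnalyticOnNhd ℂ Ψ (ball 0 1)) (hΨ0 : Ψ 0 = 0)
    (hΨlt : ∀ w ∈ ball (0 : ℂ) 1, ‖Ψ w‖ < 1)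
    (hΦden : ∀ z ∈ ball (0 : ℂ) 1, (1 : ℂ) - 2 * (t : ℂ) * Φ z + (Φ z) ^ 2 ≠ 0)
    (hΨden : ∀ w ∈ ball (0 : ℂ) 1, (1 : ℂ) - 2 * (t : ℂ) * Ψ w + (Ψ w) ^ 2 ≠ 0)
    (hfeq : ∀ z ∈ ball (0 : ℂ) 1,
      deriv f z = 1 / ((1 : ℂ) - 2 * (t : ℂ) * Φ z + (Φ z) ^ 2))
    (hgeq : ∀ w ∈ ball (0 : ℂ) 1,
      deriv g w = 1 / ((1 : ℂ) - 2 * (t : ℂ) * Ψ w + (Ψ w) ^ 2)) :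
    ∀ η : ℝ,
      (|η - 1| ≤ (1 - t ^ 2) / (3 * t ^ 2) →
        ‖iteratedDeriv 3 f 0 / 6 - (η : ℂ) * (iteratedDeriv 2 f 0 / 2) ^ 2‖ ≤ 4 * t / 3) ∧
      ((1 - t ^ 2) / (3 * t ^ 2) ≤ |η - 1| →
        ‖iteratedDeriv 3 f 0 / 6 - (η : ℂ) * (iteratedDeriv 2 f 0 / 2) ^ 2‖ ≤ 2 * |η - 1| / (1 - t ^ 2)) :=
  chebyshev_fekete_szego_general t f g Φ Ψ ht ht1 hf hf0 hf1 hg hgf hΦ hΦ0 hΦlt hΨ hΨ0 hΨlt hfeq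
    hgeq
end
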